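/- arXiv:2603.17785 — 5 statements merged into one kernel-verified Lean document; each statement's English description precedes it below -/
import Mathlib

section
/- Given n ≥ 1 nonzero vectors x¹,…,xⁿ ∈ ℝ^d, the number of distinct binary vectors π ∈ {0,1}ⁿ such that the open region R_π = ∩_{i=1}^n {w ∈ ℝ^d : (2π_i − 1)⟨w, x^i⟩ > 0} is non-empty is at most 2 Σ_{k=0}^{d-1} C(n−1, k). -/
/-!
Patterns on `x¹, …, xⁿ⁺¹` restrict to patterns on `x¹, …, xⁿ`, and a pattern `b` has both
extensions only if it is realized by some `w ⟂ xⁿ⁺¹`: if `w₊, w₋` realize the two extensions,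
the positive combination `-⟨w₋, xⁿ⁺¹⟩ w₊ + ⟨w₊, xⁿ⁺¹⟩ w₋` realizes `b` and is orthogonal to
`xⁿ⁺¹`. Such `b` are patterns of the projections of `x¹, …, xⁿ` onto the hyperplane `(xⁿ⁺¹)ᗮ`,
one dimension lower. So the maximal number `C(n, d)` of patterns of `n` vectors in dimension `d`
satisfies `C(n+1, d) ≤ C(n, d) + C(n, d-1)`, which Pascal's rule turns into the bound
`2 ∑_{k<d} (n-1).choose k`.
-/

open RealInnerProductSpace Finset

namespace Cover

variable {ι E : Type*} [NormedAddCommGroup E] [InnerProductSpace ℝ E]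

def IsSignPattern (x : ι → E) (π : ι → Bool) (w : E) : Prop :=
  ∀ i, if π i then 0 < ⟪w, x i⟫ else ⟪w, x i⟫ < 0

def signPatterns (x : ι → E) : Set (ι → Bool) :=
  {π | ∃ w, IsSignPattern x π w}

theorem IsSignPattern.comp {x : ι → E} {π : ι → Bool} {w : E} (h : IsSignPattern x π w)
    {κ : Type*} (f : κ → ι) : IsSignPattern (x ∘ f) (π ∘ f) w :=
  fun i => h (f i)

theorem IsSignPattern.smul_add_smul {x : ι → E} {π : ι → Bool} {w₁ w₂ : E}
    (h₁ : IsSignPattern x π w₁) (h₂ : IsSignPattern x π w₂) {a b : ℝ} (ha : 0 < a) (hb : 0 < b) :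
    IsSignPattern x π (a • w₁ + b • w₂) := by
  intro i
  have h₁ := h₁ i
  have h₂ := h₂ i
  rw [inner_add_left, real_inner_smul_left, real_inner_smul_left]
  split_ifs at h₁ h₂ ⊢ <;> nlinarith

theorem IsSignPattern.orthogonalProjectionOnto {x : ι → E} {π : ι → Bool} {w : E}
    (h : IsSignPattern x π w) (K : Submodule ℝ E) [K.HasOrthogonalProjection] (hw : w ∈ K) :
    IsSignPattern (fun i => K.orthogonalProjectionOnto (x i)) π ⟨w, hw⟩ := by
  intro i
  rw [Submodule.inner_orthogonalProjectionOnto_eq_of_mem_left]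
  exact h i

theorem signPatterns_eq_empty_of_eq_zero {x : ι → E} {i : ι} (hi : x i = 0) :
    signPatterns x = ∅ := by
  refine Set.eq_empty_of_forall_notMem fun π ⟨w, hw⟩ => ?_
  have := hw i
  rw [hi, inner_zero_right] at this
  split_ifs at this <;> exact lt_irrefl 0 this

theorem mem_signPatterns_comp {x : ι → E} {π : ι → Bool} (h : π ∈ signPatterns x)
    {κ : Type*} (f : κ → ι) : π ∘ f ∈ signPatterns (x ∘ f) :=
  let ⟨w, hw⟩ := h; ⟨w, hw.comp f⟩

variable {n : ℕ}

noncomputable def restrictToLastHyperplane (x : Fin (n + 1) → E) :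
    Fin n → (ℝ ∙ x (Fin.last n))ᗮ :=
  fun i => (ℝ ∙ x (Fin.last n))ᗮ.orthogonalProjectionOnto (x i.castSucc)

theorem snoc_mem_signPatterns_true_false {x : Fin (n + 1) → E} {b : Fin n → Bool}
    (ht : (Fin.snoc b true : Fin (n + 1) → Bool) ∈ signPatterns x)
    (hf : (Fin.snoc b false : Fin (n + 1) → Bool) ∈ signPatterns x) :
    b ∈ signPatterns (restrictToLastHyperplane x) := by
  obtain ⟨w₁, hw₁⟩ := ht
  obtain ⟨w₂, hw₂⟩ := hf
  set v := x (Fin.last n)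
  have hv₁ : 0 < ⟪w₁, v⟫ := by simpa using hw₁ (Fin.last n)
  have hv₂ : ⟪w₂, v⟫ < 0 := by simpa using hw₂ (Fin.last n)
  have hb₁ := hw₁.comp Fin.castSucc
  have hb₂ := hw₂.comp Fin.castSucc
  rw [Fin.snoc_comp_castSucc] at hb₁ hb₂
  have hw : (-⟪w₂, v⟫) • w₁ + ⟪w₁, v⟫ • w₂ ∈ (ℝ ∙ v)ᗮ := by
    rw [Submodule.mem_orthogonal_singleton_iff_inner_left, inner_add_left,
      real_inner_smul_left, real_inner_smul_left]
    ring
  exact ⟨_, (hb₁.smul_add_smul hb₂ (neg_pos.2 hv₂) hv₁).orthogonalProjectionOnto _ hw⟩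

theorem ncard_eq_ncard_snoc_true_add_ncard_snoc_false (S : Set (Fin (n + 1) → Bool)) :
    S.ncard = {b | (Fin.snoc b true : Fin (n + 1) → Bool) ∈ S}.ncard
      + {b | (Fin.snoc b false : Fin (n + 1) → Bool) ∈ S}.ncard := by
  let g (c : Bool) (b : Fin n → Bool) : Fin (n + 1) → Bool := Fin.snoc b c
  have hS : S = g true '' {b | g true b ∈ S} ∪ g false '' {b | g false b ∈ S} := by
    ext π
    rw [← Fin.snoc_init_self π]
    cases π (Fin.last n) <;> simp [g]
  have hdisj : Disjoint (g true '' {b | g true b ∈ S}) (g false '' {b | g false b ∈ S}) := by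
    rw [Set.disjoint_left]
    rintro _ ⟨b, -, rfl⟩ ⟨b', -, h⟩
    simp [g] at h
  conv_lhs => rw [hS]
  have hg (c : Bool) : (g c).Injective := Fin.snoc_left_injective (α := fun _ => Bool) c
  rw [Set.ncard_union_eq hdisj, Set.ncard_image_of_injective _ (hg true),
    Set.ncard_image_of_injective _ (hg false)]

theorem ncard_signPatterns_le_add (x : Fin (n + 1) → E) :
    (signPatterns x).ncard ≤ (signPatterns (x ∘ Fin.castSucc)).ncard
      + (signPatterns (restrictToLastHyperplane x)).ncard := by
  rw [ncard_eq_ncard_snoc_true_add_ncard_snoc_false, ← Set.ncard_union_add_ncard_inter]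
  refine add_le_add (Set.ncard_le_ncard ?_) (Set.ncard_le_ncard ?_)
  · rintro b (h | h) <;> simpa using mem_signPatterns_comp h Fin.castSucc
  · exact fun b ⟨ht, hf⟩ => snoc_mem_signPatterns_true_false ht hf

theorem sum_range_choose_succ (n e : ℕ) :
    ∑ k ∈ range (e + 1), (n + 1).choose k
      = ∑ k ∈ range (e + 1), n.choose k + ∑ k ∈ range e, n.choose k := by
  rw [sum_range_succ', sum_range_succ' (fun k => n.choose k)]
  simp only [Nat.choose_succ_succ', sum_add_distrib, Nat.choose_zero_right]
  ring

theorem ncard_signPatterns_le (x : Fin (n + 1) → E) [FiniteDimensional ℝ E] :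
    (signPatterns x).ncard ≤ 2 * ∑ k ∈ range (Module.finrank ℝ E), n.choose k := by
  induction n generalizing E with
  | zero =>
    by_cases hx : x (Fin.last 0) = 0
    · simp [signPatterns_eq_empty_of_eq_zero hx]
    have : Nontrivial E := nontrivial_of_ne _ _ hx
    obtain ⟨e, he⟩ := Nat.exists_eq_add_of_lt (Module.finrank_pos (R := ℝ) (M := E))
    calc (signPatterns x).ncard ≤ Nat.card (Fin 1 → Bool) := Set.ncard_le_card _
      _ = 2 * ∑ k ∈ range (e + 1), Nat.choose 0 k := by simp [sum_range_succ']
      _ = _ := by rw [he, zero_add]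
  | succ n ih =>
    by_cases hx : x (Fin.last (n + 1)) = 0
    · simp [signPatterns_eq_empty_of_eq_zero hx]
    have : Nontrivial E := nontrivial_of_ne _ _ hx
    obtain ⟨e, he⟩ := Nat.exists_eq_add_of_lt (Module.finrank_pos (R := ℝ) (M := E))
    rw [zero_add] at he
    have : Fact (Module.finrank ℝ E = e + 1) := ⟨he⟩
    have hH : Module.finrank ℝ (ℝ ∙ x (Fin.last (n + 1)))ᗮ = e :=
      Submodule.finrank_orthogonal_span_singleton hx
    calc (signPatterns x).ncard
        ≤ (signPatterns (x ∘ Fin.castSucc)).ncard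
          + (signPatterns (restrictToLastHyperplane x)).ncard := ncard_signPatterns_le_add x
      _ ≤ 2 * ∑ k ∈ range (e + 1), n.choose k + 2 * ∑ k ∈ range e, n.choose k := by
        grw [ih (x ∘ Fin.castSucc), ih (restrictToLastHyperplane x), he, hH]
      _ = 2 * ∑ k ∈ range (Module.finrank ℝ E), (n + 1).choose k := by
        rw [he, sum_range_choose_succ]; ring

end Cover

theorem stmt6_general (d n : ℕ) (hn : 1 ≤ n) (x : Fin n → EuclideanSpace ℝ (Fin d)) :
    Set.ncard {π : Fin n → Bool | ∃ w : EuclideanSpace ℝ (Fin d),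
        ∀ i, if π i then 0 < ⟪w, x i⟫ else ⟪w, x i⟫ < 0}
      ≤ 2 * ∑ k ∈ Finset.range d, (n - 1).choose k := by
  obtain ⟨m, rfl⟩ : ∃ m, n = m + 1 := ⟨n - 1, by omega⟩
  have h := Cover.ncard_signPatterns_le x
  rw [finrank_euclideanSpace_fin] at h
  exact h

/-- Cover's bound: the number of sign patterns `π ∈ {0,1}ⁿ` whose open dual region
`R_π = ∩_i {w : (2π_i − 1)⟨w,x^i⟩ > 0}` is non-empty is at most `2 Σ_{k=0}^{d-1} C(n−1,k)`. -/
theorem stmt6 (d n : ℕ) (hn : 1 ≤ n) (x : Fin n → EuclideanSpace ℝ (Fin d))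
    (hx : ∀ i, x i ≠ 0) :
    Set.ncard {π : Fin n → Bool | ∃ w : EuclideanSpace ℝ (Fin d),
        ∀ i, if π i then 0 < ⟪w, x i⟫ else ⟪w, x i⟫ < 0}
      ≤ 2 * ∑ k ∈ Finset.range d, (n - 1).choose k :=
  stmt6_general d n hn x
end

section
/- Let A ∈ {0,1}^{N×N} be a 0-1 matrix such that perm(A) = |det(A)| and det(A) ≠ 0, and let B ∈ ℝ^{N×N} be a matrix such that B_{ij} > 0 whenever A_{ij} = 1. Then det(A ⊙ B) ≠ 0, where A ⊙ B denotes the Hadamard (entrywise) product. -/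
/-!
For `σ` in the support of a nonnegative matrix `M` (the permutations with `∏ i, M (σ i) i ≠ 0`),
the terms of `det M` and `perm M` agree up to the sign of `σ`, so `|det M| = perm M` forces all
of them to carry one common sign `ε`. The Hadamard product `A ⊙ B` has the same support as `A`
and nonnegative entries, hence `det (A ⊙ B) = ε • perm (A ⊙ B)`, and this permanent is positive
because `det A ≠ 0` supplies a permutation in the support.
-/

/-- The permanent of a square real matrix. -/
noncomputable def Matrix.perm' {N : ℕ} (A : Matrix (Fin N) (Fin N) ℝ) : ℝ :=
  ∑ p : Equiv.Perm (Fin N), ∏ i, A i (p i)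

open Equiv Finset

theorem Int.units_eq_of_sum_smul_eq_smul_sum {ι R : Type*} [CommRing R] [LinearOrder R]
    [IsStrictOrderedRing R] {s : Finset ι} {u : ι → ℤˣ} {c : ι → R} {ε : ℤˣ}
    (hc : ∀ i ∈ s, 0 ≤ c i) (h : ∑ i ∈ s, u i • c i = ε • ∑ i ∈ s, c i) :
    ∀ i ∈ s, c i ≠ 0 → u i = ε := by
  have hle : ∀ i ∈ s, (ε * u i) • c i ≤ c i := fun i hi => by
    rcases Int.units_eq_one_or (ε * u i) with h1 | h1 <;> simp [h1, hc i hi]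
  have hsum : ∑ i ∈ s, (ε * u i) • c i = ∑ i ∈ s, c i := by
    simp_rw [mul_smul, ← smul_sum, h, smul_smul, Int.units_mul_self, one_smul]
  intro i hi hci
  rcases Int.units_eq_one_or (ε * u i) with h1 | h1
  · rw [← Int.units_mul_self ε] at h1
    exact mul_left_cancel h1
  · have hi' := (sum_eq_sum_iff_of_le hle).1 hsum i hi
    rw [h1, Units.neg_smul, one_smul, neg_eq_iff_add_eq_zero, ← two_mul] at hi'
    exact absurd hi' (mul_ne_zero two_ne_zero hci)

namespace Matrix

variable {n R : Type*} [Fintype n] [DecidableEq n]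

theorem det_eq_smul_permanent_of_sign_eq [CommRing R] {M : Matrix n n R} {ε : ℤˣ}
    (h : ∀ σ : Perm n, ∏ i, M (σ i) i ≠ 0 → Perm.sign σ = ε) : M.det = ε • M.permanent := by
  rw [det_apply, permanent, smul_sum]
  refine sum_congr rfl fun σ _ => ?_
  by_cases hσ : ∏ i, M (σ i) i = 0
  · simp [hσ]
  · rw [h σ hσ]

variable [CommRing R] [LinearOrder R] [IsStrictOrderedRing R] {M : Matrix n n R}

theorem permanent_nonneg (hM : ∀ i j, 0 ≤ M i j) : 0 ≤ M.permanent :=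
  sum_nonneg fun _ _ => prod_nonneg fun _ _ => hM _ _

theorem permanent_pos (hM : ∀ i j, 0 ≤ M i j) (σ : Perm n) (hσ : ∀ i, 0 < M (σ i) i) :
    0 < M.permanent :=
  sum_pos' (fun _ _ => prod_nonneg fun _ _ => hM _ _)
    ⟨σ, mem_univ σ, prod_pos fun i _ => hσ i⟩

theorem exists_sign_eq_of_abs_det_eq_permanent (hM : ∀ i j, 0 ≤ M i j)
    (h : |M.det| = M.permanent) :
    ∃ ε : ℤˣ, ∀ σ : Perm n, ∏ i, M (σ i) i ≠ 0 → Perm.sign σ = ε := by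
  have of_det_eq : ∀ ε : ℤˣ, M.det = ε • M.permanent →
      ∀ σ : Perm n, ∏ i, M (σ i) i ≠ 0 → Perm.sign σ = ε := fun ε hε σ =>
    Int.units_eq_of_sum_smul_eq_smul_sum (fun σ _ => prod_nonneg fun i _ => hM _ _)
      (by rwa [det_apply] at hε) σ (mem_univ σ)
  rcases (abs_eq (permanent_nonneg hM)).1 h with h' | h'
  · exact ⟨1, of_det_eq 1 (by rw [h', one_smul])⟩
  · exact ⟨-1, of_det_eq (-1) (by rw [h', Units.neg_smul, one_smul])⟩

end Matrix

/-- If a 0-1 matrix `A` satisfies `perm(A) = |det(A)|` and `det(A) ≠ 0`, and `B` has strictly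
positive entries wherever `A` has a `1`, then the Hadamard product `A ⊙ B` has nonzero
determinant. -/
theorem stmt9 {N : ℕ} (A B : Matrix (Fin N) (Fin N) ℝ)
    (hA01 : ∀ i j, A i j = 0 ∨ A i j = 1)
    (hperm : Matrix.perm' A = |A.det|) (hdet : A.det ≠ 0)
    (hB : ∀ i j, A i j = 1 → 0 < B i j) :
    (Matrix.hadamard A B).det ≠ 0 := by
  have hA : ∀ i j, 0 ≤ A i j := fun i j => by rcases hA01 i j with h | h <;> simp [h]
  have habs : |A.det| = A.permanent := by
    rw [← hperm, ← Matrix.permanent_transpose]; rfl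
  obtain ⟨ε, hε⟩ := Matrix.exists_sign_eq_of_abs_det_eq_permanent hA habs
  obtain ⟨σ, -, hσ⟩ := exists_ne_zero_of_sum_ne_zero <|
    (smul_eq_zero_iff_eq ε).not.1 (Matrix.det_eq_smul_permanent_of_sign_eq hε ▸ hdet)
  have hAB : ∀ i j, 0 ≤ A.hadamard B i j := fun i j => by
    rcases hA01 i j with h | h
    · simp [h]
    · simpa [h] using (hB i j h).le
  have hεAB : ∀ τ : Perm (Fin N), ∏ i, A.hadamard B (τ i) i ≠ 0 → Perm.sign τ = ε :=
    fun τ hτ => hε τ (left_ne_zero_of_mul (by simpa [prod_mul_distrib] using hτ))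
  have hσAB : ∀ i, 0 < A.hadamard B (σ i) i := fun i => by
    have h1 : A (σ i) i = 1 := (hA01 _ _).resolve_left (prod_ne_zero_iff.1 hσ i (mem_univ i))
    simpa [h1] using hB _ _ h1
  rw [Matrix.det_eq_smul_permanent_of_sign_eq hεAB, Ne, smul_eq_zero_iff_eq]
  exact (Matrix.permanent_pos hAB σ hσAB).ne'
end

section
/- Let w₀¹,…,w₀ᴺ ∈ S^{d-1}, x¹,…,xⁿ ∈ ℝ^d with N ≤ n, and define the N×n matrix K with entries K_{ij} = σ(⟨w₀^i, x^j⟩) where σ is ReLU. Write K = Π ⊙ (WᵀX) where Π_{ij} = 1 if ⟨w₀^i, x^j⟩ > 0 and 0 otherwise. If some N×N minor Π_N of Π has full rank and satisfies perm(Π_N) = |det(Π_N)|, then the rows of K (equivalently, the measurement vectors Kδ_{w₀^i} ∈ ℝⁿ) are linearly independent. -/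
/-!
For a matrix `A` with nonnegative entries, `perm A - ε det A = ∑_σ (1 - ε sign σ) ∏ᵢ A i (σ i)`
is a sum of nonnegative terms, so `perm A = |det A|` holds exactly when all permutations with
nonzero diagonal product `∏ᵢ A i (σ i)` have one common sign. That condition only sees the zero
pattern of `A`, so it passes from the activation pattern `Π` to the ReLU minor `Π ⊙ (WᵀX)`,
whose determinant is then `±perm` of a matrix with a nonzero diagonal product, hence nonzero.
-/

open RealInnerProductSpace

open Equiv

namespace Matrix

variable {N : ℕ}

lemma det_eq_sum_sign_mul_prod (A : Matrix (Fin N) (Fin N) ℝ) :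
    A.det = ∑ σ : Perm (Fin N), ((Perm.sign σ : ℤ) : ℝ) * ∏ i, A i (σ i) := by
  rw [← det_transpose, det_apply']
  rfl

lemma prod_apply_perm_nonneg {A : Matrix (Fin N) (Fin N) ℝ} (hA : ∀ i j, 0 ≤ A i j)
    (σ : Perm (Fin N)) : 0 ≤ ∏ i, A i (σ i) :=
  Finset.prod_nonneg fun i _ => hA i (σ i)

lemma perm'_eq_zero_iff {A : Matrix (Fin N) (Fin N) ℝ} (hA : ∀ i j, 0 ≤ A i j) :
    A.perm' = 0 ↔ ∀ σ : Perm (Fin N), ∏ i, A i (σ i) = 0 := by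
  simp only [perm', Finset.sum_eq_zero_iff_of_nonneg fun σ _ => prod_apply_perm_nonneg hA σ,
    Finset.mem_univ, true_implies]

lemma perm'_eq_abs_det_iff {A : Matrix (Fin N) (Fin N) ℝ} (hA : ∀ i j, 0 ≤ A i j) :
    A.perm' = |A.det| ↔
      ∃ ε : ℤˣ, ∀ σ : Perm (Fin N), ∏ i, A i (σ i) ≠ 0 → Perm.sign σ = ε := by
  constructor
  · intro hperm
    obtain ⟨ε, hε⟩ : ∃ ε : ℤˣ, |A.det| = ((ε : ℤ) : ℝ) * A.det :=
      ⟨if 0 ≤ A.det then 1 else -1, by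
        split_ifs with h
        · simp [abs_of_nonneg h]
        · simp [abs_of_neg (not_le.mp h)]⟩
    have hsum : ∑ σ : Perm (Fin N),
        (1 - (((ε * Perm.sign σ : ℤˣ) : ℤ) : ℝ)) * ∏ i, A i (σ i) = 0 := by
      simp only [sub_mul, one_mul, Finset.sum_sub_distrib, Units.val_mul, Int.cast_mul, mul_assoc,
        ← Finset.mul_sum, ← det_eq_sum_sign_mul_prod]
      rw [← hε, ← hperm, perm', sub_self]
    have hterm_nonneg : ∀ σ : Perm (Fin N),
        0 ≤ (1 - (((ε * Perm.sign σ : ℤˣ) : ℤ) : ℝ)) * ∏ i, A i (σ i) := fun σ =>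
      mul_nonneg (by rcases Int.units_eq_one_or (ε * Perm.sign σ) with h | h <;> simp [h])
        (prod_apply_perm_nonneg hA σ)
    refine ⟨ε, fun σ hσ => ?_⟩
    have hzero := (Finset.sum_eq_zero_iff_of_nonneg fun σ _ => hterm_nonneg σ).mp hsum σ
      (Finset.mem_univ σ)
    have hunit : ε * Perm.sign σ = 1 := by
      rcases Int.units_eq_one_or (ε * Perm.sign σ) with h | h
      · exact h
      · rw [h] at hzero; norm_num at hzero; exact absurd hzero hσ
    calc Perm.sign σ = ε * ε * Perm.sign σ := by rw [Int.units_mul_self, one_mul]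
      _ = ε := by rw [mul_assoc, hunit, mul_one]
  · rintro ⟨ε, hε⟩
    have hdet : A.det = ((ε : ℤ) : ℝ) * A.perm' := by
      rw [det_eq_sum_sign_mul_prod, perm', Finset.mul_sum]
      refine Finset.sum_congr rfl fun σ _ => ?_
      by_cases hσ : ∏ i, A i (σ i) = 0
      · simp [hσ]
      · rw [hε σ hσ]
    have hperm_nonneg : 0 ≤ A.perm' :=
      Finset.sum_nonneg fun σ _ => prod_apply_perm_nonneg hA σ
    rcases Int.units_eq_one_or ε with h | h <;> simp [hdet, h, abs_of_nonneg hperm_nonneg]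

lemma det_ne_zero_of_perm'_eq_abs_det_of_zero_iff {A B : Matrix (Fin N) (Fin N) ℝ}
    (hA : ∀ i j, 0 ≤ A i j) (hB : ∀ i j, 0 ≤ B i j) (hAB : ∀ i j, A i j = 0 ↔ B i j = 0)
    (hperm : A.perm' = |A.det|) (hdet : A.det ≠ 0) : B.det ≠ 0 := by
  have hprod : ∀ σ : Perm (Fin N), ∏ i, A i (σ i) = 0 ↔ ∏ i, B i (σ i) = 0 := fun σ => by
    simp only [Finset.prod_eq_zero_iff, hAB]
  obtain ⟨ε, hε⟩ := (perm'_eq_abs_det_iff hA).mp hperm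
  have hpermB : B.perm' = |B.det| :=
    (perm'_eq_abs_det_iff hB).mpr ⟨ε, fun σ hσ => hε σ (mt (hprod σ).mp hσ)⟩
  have hpermB_ne : B.perm' ≠ 0 := by
    rw [Ne, perm'_eq_zero_iff hB, ← forall_congr' hprod, ← perm'_eq_zero_iff hA, hperm]
    exact abs_ne_zero.mpr hdet
  rwa [hpermB, Ne, abs_eq_zero] at hpermB_ne

end Matrix

lemma Matrix.linearIndependent_rows_of_det_submatrix_ne_zero {R : Type*} [CommRing R]
    [IsDomain R] {m n : Type*} [Fintype m] [DecidableEq m] (K : Matrix m n R) (c : m → n)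
    (hK : (K.submatrix id c).det ≠ 0) : LinearIndependent R K.row :=
  LinearIndependent.of_comp (LinearMap.funLeft R R c) (linearIndependent_rows_of_det_ne_zero hK)

theorem stmt11_general (d n N : ℕ)
    (x : Fin n → EuclideanSpace ℝ (Fin d)) (w₀ : Fin N → EuclideanSpace ℝ (Fin d))
    (c : Fin N → Fin n)
    (hrank : (Matrix.of fun i k : Fin N =>
        if 0 < ⟪w₀ i, x (c k)⟫ then (1 : ℝ) else 0).det ≠ 0)
    (hperm : Matrix.perm' (Matrix.of fun i k : Fin N =>
          if 0 < ⟪w₀ i, x (c k)⟫ then (1 : ℝ) else 0)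
        = |(Matrix.of fun i k : Fin N =>
          if 0 < ⟪w₀ i, x (c k)⟫ then (1 : ℝ) else 0).det|) :
    LinearIndependent ℝ (fun i : Fin N => fun j : Fin n => max 0 ⟪w₀ i, x j⟫) := by
  let K : Matrix (Fin N) (Fin n) ℝ := Matrix.of fun i j => max 0 ⟪w₀ i, x j⟫
  refine K.linearIndependent_rows_of_det_submatrix_ne_zero c ?_
  refine Matrix.det_ne_zero_of_perm'_eq_abs_det_of_zero_iff (fun i j => ?_) (fun i j => ?_)
    (fun i j => ?_) hperm hrank
  · dsimp only [Matrix.of_apply]; split_ifs <;> norm_num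
  · exact le_max_left _ _
  · simp [K, not_lt]

/-- If some `N×N` column-minor `Π_N` of the activation-pattern matrix `Π` is nonsingular and
satisfies `perm(Π_N) = |det(Π_N)|`, then the rows of `K`, i.e. the measurement vectors
`Kδ_{w₀^i} = (σ(⟨w₀^i,x^1⟩),…,σ(⟨w₀^i,x^n⟩))`, are linearly independent. -/
theorem stmt11 (d n N : ℕ) (hNn : N ≤ n)
    (x : Fin n → EuclideanSpace ℝ (Fin d)) (w₀ : Fin N → EuclideanSpace ℝ (Fin d))
    (hw : ∀ i, ‖w₀ i‖ = 1)
    (c : Fin N → Fin n) (hc : Function.Injective c)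
    (hrank : (Matrix.of fun i k : Fin N =>
        if 0 < ⟪w₀ i, x (c k)⟫ then (1 : ℝ) else 0).det ≠ 0)
    (hperm : Matrix.perm' (Matrix.of fun i k : Fin N =>
          if 0 < ⟪w₀ i, x (c k)⟫ then (1 : ℝ) else 0)
        = |(Matrix.of fun i k : Fin N =>
          if 0 < ⟪w₀ i, x (c k)⟫ then (1 : ℝ) else 0).det|) :
    LinearIndependent ℝ (fun i : Fin N => fun j : Fin n => max 0 ⟪w₀ i, x j⟫) :=
  stmt11_general d n N x w₀ c hrank hperm
end

section
/- Suppose μ₀ = Σ_{i=1}^N c₀^i σ^i δ_{w₀^i} with c₀^i > 0, σ^i ∈ {−1,+1}, and distinct points w₀^i ∈ S^{d-1} satisfies Kμ₀ = y₀. Suppose there exists a dual certificate η₀ ∈ C(S^{d-1}) with ‖η₀‖_∞ ≤ 1, η₀(w₀^i) = σ^i for all i, and |η₀(w)| < 1 for all w ∉ {w₀^1,…,w₀^N}, and that the vectors Kδ_{w₀^1},…,Kδ_{w₀^N} ∈ ℝⁿ are linearly independent. Then μ₀ is the unique minimizer of ‖μ‖_TV over all μ ∈ M(S^{d-1}) with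 Kμ = y₀. -/
open RealInnerProductSpace MeasureTheory

/-- The forward operator `K : M(S^{d-1}) → ℝⁿ`, `(Kμ)_j = ∫ σ(⟨w,x^j⟩) dμ(w)` with
`σ = ReLU`, defined on signed measures via the Jordan decomposition. -/
noncomputable def Ksgn (d n : ℕ) (x : Fin n → EuclideanSpace ℝ (Fin d))
    (μ : SignedMeasure ↥(Metric.sphere (0 : EuclideanSpace ℝ (Fin d)) 1)) : Fin n → ℝ :=
  fun j =>
    (∫ w, max 0 ⟪(w : EuclideanSpace ℝ (Fin d)), x j⟫ ∂μ.toJordanDecomposition.posPart)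
      - ∫ w, max 0 ⟪(w : EuclideanSpace ℝ (Fin d)), x j⟫ ∂μ.toJordanDecomposition.negPart

/-- The total variation norm of a signed measure. -/
noncomputable def tvNorm {X : Type*} [MeasurableSpace X] (μ : SignedMeasure X) : ℝ :=
  (μ.totalVariation Set.univ).toReal

/-!
The function `η = ∑ⱼ p₀ʲ σ(⟨·, xʲ⟩)` pairs with any feasible `μ` to `⟨p₀, y₀⟩ = ∑ᵢ cᵢ`, while
`|η| ≤ 1` bounds this pairing by `‖μ‖_TV`; since `‖μ₀‖_TV ≤ ∑ᵢ cᵢ`, this gives optimality. If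
`‖μ‖_TV` is also optimal, the pairing is an equality, which forces `|μ|` to vanish where
`|η| < 1`, i.e. off the atoms `w₀ⁱ`. So `μ` is a combination of the `δ_{w₀ⁱ}`, and linear
independence of the `Kδ_{w₀ⁱ}` pins down its coefficients.
-/

open Set VectorMeasure

namespace MeasureTheory.VectorMeasure

variable {X : Type*} [MeasurableSpace X]

theorem smul_dirac {M R : Type*} [AddCommMonoid M] [TopologicalSpace M] [Semiring R]
    [DistribMulAction R M] [ContinuousConstSMul R M] (a : X) (r : R) (v : M) :
    r • dirac a v = dirac a (r • v) := by
  ext A hA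
  by_cases ha : a ∈ A <;> simp [hA, ha]

variable [MeasurableSingletonClass X]

theorem restrict_finset_eq_sum_dirac {M : Type*} [TopologicalSpace M] [AddCommMonoid M]
    [T2Space M] [ContinuousAdd M] (μ : VectorMeasure X M) (S : Finset X) :
    μ.restrict S = ∑ a ∈ S, dirac a (μ {a}) := by
  classical
  induction S using Finset.induction_on with
  | empty => simp
  | insert a S ha ih =>
    rw [Finset.coe_insert, insert_eq, restrict_union (by simpa using ha)
      (measurableSet_singleton a) S.measurableSet, restrict_singleton, ih, Finset.sum_insert ha]

theorem eq_sum_dirac_of_variation_compl_eq_zero {V : Type*} [NormedAddCommGroup V]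
    (μ : VectorMeasure X V) (S : Finset X) (h : μ.variation (↑S)ᶜ = 0) :
    μ = ∑ a ∈ S, dirac a (μ {a}) := by
  have hnull : μ.restrict (↑S)ᶜ = 0 := by
    ext A hA
    rw [restrict_apply _ S.measurableSet.compl hA, zero_apply]
    exact (variation_apply_eq_zero S.measurableSet.compl).1 h _ inter_subset_right
      (hA.inter S.measurableSet.compl)
  conv_lhs => rw [← restrict_add_restrict_compl (v := μ) S.measurableSet, hnull, add_zero]
  exact restrict_finset_eq_sum_dirac μ S

end MeasureTheory.VectorMeasure

theorem MeasureTheory.Measure.toSignedMeasure_dirac {X : Type*} [MeasurableSpace X] (a : X) :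
    (Measure.dirac a).toSignedMeasure = VectorMeasure.dirac a 1 := by
  ext A hA
  by_cases ha : a ∈ A <;>
    simp [Measure.toSignedMeasure_apply_measurable hA, hA, ha, measureReal_def]

namespace MeasureTheory.SignedMeasure

variable {X : Type*} [MeasurableSpace X]

instance isFiniteMeasure_variation (μ : SignedMeasure X) : IsFiniteMeasure μ.variation := by
  rw [← totalVariation_eq_variation, totalVariation]
  infer_instance

theorem tvNorm_eq_variation_real (μ : SignedMeasure X) : tvNorm μ = μ.variation.real univ := by
  rw [tvNorm, totalVariation_eq_variation, measureReal_def]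

theorem integral_eq_integral_posPart_sub_integral_negPart {G : Type*} [NormedAddCommGroup G]
    [NormedSpace ℝ G] [CompleteSpace G] (μ : SignedMeasure X) {f : X → G}
    (hpos : Integrable f μ.toJordanDecomposition.posPart)
    (hneg : Integrable f μ.toJordanDecomposition.negPart) :
    ∫ᵛ x, f x ∂<•μ =
      ∫ x, f x ∂μ.toJordanDecomposition.posPart - ∫ x, f x ∂μ.toJordanDecomposition.negPart := by
  conv_lhs => rw [← μ.toSignedMeasure_toJordanDecomposition, JordanDecomposition.toSignedMeasure]
  rw [integral_sub_vectorMeasure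
      (by rwa [VectorMeasure.Integrable, Measure.variation_toSignedMeasure])
      (by rwa [VectorMeasure.Integrable, Measure.variation_toSignedMeasure]),
    integral_toSignedMeasure, integral_toSignedMeasure]

theorem norm_integral_le_integral_norm (μ : SignedMeasure X) (f : X → ℝ) :
    ‖∫ᵛ x, f x ∂<•μ‖ ≤ ∫ x, ‖f x‖ ∂μ.variation := by
  have hB : ‖(ContinuousLinearMap.lsmul ℝ ℝ : ℝ →L[ℝ] ℝ →L[ℝ] ℝ).flip‖ ≤ 1 := by
    rw [ContinuousLinearMap.opNorm_flip]
    exact ContinuousLinearMap.opNorm_lsmul_le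
  exact VectorMeasure.norm_integral_le_integral_norm.trans
    (mul_le_of_le_one_left (integral_nonneg fun _ => norm_nonneg _) hB)

theorem integral_le_tvNorm (μ : SignedMeasure X) {f : X → ℝ} (hf : ∀ x, |f x| ≤ 1) :
    ∫ᵛ x, f x ∂<•μ ≤ tvNorm μ := calc
  ∫ᵛ x, f x ∂<•μ ≤ ∫ x, ‖f x‖ ∂μ.variation :=
    (Real.le_norm_self _).trans (norm_integral_le_integral_norm μ f)
  _ ≤ ∫ _, (1 : ℝ) ∂μ.variation :=
    integral_mono_of_nonneg (ae_of_all _ fun _ => norm_nonneg _) (integrable_const 1)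
      (ae_of_all _ hf)
  _ = tvNorm μ := by simp [tvNorm_eq_variation_real]

theorem variation_abs_lt_one_eq_zero_of_integral_eq_tvNorm (μ : SignedMeasure X) {f : X → ℝ}
    (hfm : Measurable f) (hf : ∀ x, |f x| ≤ 1) (heq : ∫ᵛ x, f x ∂<•μ = tvNorm μ) :
    μ.variation {x | |f x| < 1} = 0 := by
  have hint : Integrable (fun x => |f x|) μ.variation :=
    Integrable.of_bound hfm.abs.aestronglyMeasurable 1 (ae_of_all _ fun x => by simpa using hf x)
  have hzero : ∫ x, (1 - |f x|) ∂μ.variation = 0 := by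
    refine le_antisymm ?_ (integral_nonneg fun x => sub_nonneg.2 (hf x))
    rw [integral_sub (integrable_const 1) hint, integral_const, smul_eq_mul, mul_one,
      ← tvNorm_eq_variation_real, ← heq, sub_nonpos]
    exact (Real.le_norm_self _).trans (norm_integral_le_integral_norm μ f)
  have hae := (integral_eq_zero_iff_of_nonneg (fun x => sub_nonneg.2 (hf x))
    ((integrable_const 1).sub hint)).1 hzero
  refine measure_mono_null (fun x hx => ?_) (ae_iff.1 hae)
  simp only [mem_ofPred_eq, Pi.zero_apply] at hx ⊢
  linarith

theorem tvNorm_sum_dirac_le {ι : Type*} (s : Finset ι) (w : ι → X) (t : ι → ℝ) :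
    tvNorm (∑ i ∈ s, VectorMeasure.dirac (w i) (t i)) ≤ ∑ i ∈ s, |t i| := by
  rw [tvNorm_eq_variation_real]
  calc _ ≤ (∑ i ∈ s, (VectorMeasure.dirac (w i) (t i)).variation).real univ :=
        ENNReal.toReal_mono (by simp) (variation_finsetSum_le s _ univ)
    _ = ∑ i ∈ s, |t i| := by simp [Measure.real, ENNReal.toReal_sum]

variable [MeasurableSingletonClass X]

theorem integral_finsetSum_dirac {ι : Type*} (s : Finset ι) (w : ι → X) (t : ι → ℝ)
    (f : X → ℝ) :
    ∫ᵛ x, f x ∂<•(∑ i ∈ s, VectorMeasure.dirac (w i) (t i)) = ∑ i ∈ s, t i * f (w i) := by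
  rw [integral_finsetSum_vectorMeasure fun i _ => by
    rw [VectorMeasure.Integrable, variation_dirac]
    exact (integrable_dirac (by simp)).smul_measure (by simp)]
  simp

theorem eq_sum_dirac_of_integral_eq_tvNorm {ι : Type*} [Fintype ι] {μ : SignedMeasure X}
    {η : X → ℝ} (hηm : Measurable η) (hη : ∀ x, |η x| ≤ 1) {w : ι → X}
    (hw : Function.Injective w) (hstrict : ∀ x ∉ range w, |η x| < 1)
    (heq : ∫ᵛ x, η x ∂<•μ = tvNorm μ) :
    μ = ∑ i, VectorMeasure.dirac (w i) (μ {w i}) := by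
  classical
  have hnull : μ.variation (↑(Finset.univ.image w))ᶜ = 0 :=
    measure_mono_null (fun x hx => hstrict x (by simpa using hx))
      (variation_abs_lt_one_eq_zero_of_integral_eq_tvNorm μ hηm hη heq)
  conv_lhs => rw [eq_sum_dirac_of_variation_compl_eq_zero μ _ hnull]
  exact Finset.sum_image fun i _ j _ h => hw h

end MeasureTheory.SignedMeasure

open SignedMeasure

section Certificate

variable {X ι κ : Type*} [MeasurableSpace X]

noncomputable def forwardOperator (f : κ → X → ℝ) (μ : SignedMeasure X) : κ → ℝ :=
  fun j => ∫ᵛ x, f j x ∂<•μ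

theorem sum_mul_forwardOperator [Fintype κ] {f : κ → X → ℝ} (hfm : ∀ j, Measurable (f j))
    (hfb : ∀ j, ∃ C, ∀ x, |f j x| ≤ C) (p : κ → ℝ) (μ : SignedMeasure X) :
    ∑ j, p j * forwardOperator f μ j = ∫ᵛ x, ∑ j, p j * f j x ∂<•μ := by
  have hint : ∀ j, μ.Integrable (f j) := fun j =>
    (hfb j).elim fun C hC => Integrable.of_bound (hfm j).aestronglyMeasurable C (ae_of_all _ hC)
  rw [VectorMeasure.integral_finsetSum (f := fun j x => p j * f j x) _
    fun j _ => (hint j).smul (p j)]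
  simp only [forwardOperator, ← smul_eq_mul, integral_fun_smul]

variable [MeasurableSingletonClass X] [Fintype ι]

theorem forwardOperator_dirac (f : κ → X → ℝ) (a : X) (v : ℝ) :
    forwardOperator f (VectorMeasure.dirac a v) = v • fun j => f j a := by
  ext j
  simp [forwardOperator]

theorem forwardOperator_sum_dirac (f : κ → X → ℝ) (w : ι → X) (t : ι → ℝ) :
    forwardOperator f (∑ i, VectorMeasure.dirac (w i) (t i)) = ∑ i, t i • fun j => f j (w i) := by
  ext j
  simp [forwardOperator, integral_finsetSum_dirac]

theorem isUniqueTVMinimizer_of_certificate [Fintype κ] {f : κ → X → ℝ}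
    (hfm : ∀ j, Measurable (f j)) (hfb : ∀ j, ∃ C, ∀ x, |f j x| ≤ C) {w : ι → X} {t : ι → ℝ}
    {p : κ → ℝ} (hη : ∀ x, |∑ j, p j * f j x| ≤ 1)
    (hsat : ∀ i, t i * ∑ j, p j * f j (w i) = |t i|)
    (hstrict : ∀ x ∉ range w, |∑ j, p j * f j x| < 1)
    (hli : LinearIndependent ℝ fun i j => f j (w i)) {μ : SignedMeasure X}
    (hμ : forwardOperator f μ = forwardOperator f (∑ i, VectorMeasure.dirac (w i) (t i))) :
    tvNorm (∑ i, VectorMeasure.dirac (w i) (t i)) ≤ tvNorm μ ∧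
      (tvNorm μ = tvNorm (∑ i, VectorMeasure.dirac (w i) (t i)) →
        μ = ∑ i, VectorMeasure.dirac (w i) (t i)) := by
  have hηm : Measurable fun x => ∑ j, p j * f j x :=
    Finset.measurable_sum _ fun j _ => (hfm j).const_mul (p j)
  have hval : ∫ᵛ x, ∑ j, p j * f j x ∂<•μ = ∑ i, |t i| := by
    rw [← sum_mul_forwardOperator hfm hfb, hμ, sum_mul_forwardOperator hfm hfb,
      integral_finsetSum_dirac]
    exact Finset.sum_congr rfl fun i _ => hsat i
  have hopt : ∑ i, |t i| ≤ tvNorm μ := hval ▸ integral_le_tvNorm μ hη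
  refine ⟨(tvNorm_sum_dirac_le _ w t).trans hopt, fun heq => ?_⟩
  -- linear independence forbids repeated atoms
  have hw : Function.Injective w := hli.injective.of_comp (f := fun a j => f j a)
  have hsupp := eq_sum_dirac_of_integral_eq_tvNorm hηm hη hw hstrict
    (le_antisymm (integral_le_tvNorm μ hη) (hval ▸ heq ▸ tvNorm_sum_dirac_le _ w t))
  have hcoef : ∀ i, μ {w i} = t i := by
    refine Fintype.linearIndependent_iffₛ.1 hli _ _ ?_
    rw [← forwardOperator_sum_dirac, ← forwardOperator_sum_dirac, ← hsupp, hμ]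
  rw [hsupp]
  simp only [hcoef]

end Certificate

section ReLU

variable {d n : ℕ}

noncomputable def reluFeature (x : Fin n → EuclideanSpace ℝ (Fin d)) (j : Fin n)
    (v : Metric.sphere (0 : EuclideanSpace ℝ (Fin d)) 1) : ℝ :=
  max 0 ⟪(v : EuclideanSpace ℝ (Fin d)), x j⟫

theorem measurable_reluFeature (x : Fin n → EuclideanSpace ℝ (Fin d)) (j : Fin n) :
    Measurable (reluFeature x j) :=
  (continuous_const.max (continuous_subtype_val.inner continuous_const)).measurable

theorem abs_reluFeature_le (x : Fin n → EuclideanSpace ℝ (Fin d)) (j : Fin n)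
    (v : Metric.sphere (0 : EuclideanSpace ℝ (Fin d)) 1) : |reluFeature x j v| ≤ ‖x j‖ := by
  rw [reluFeature, abs_of_nonneg (le_max_left _ _)]
  refine max_le (norm_nonneg _) ((le_abs_self _).trans ?_)
  simpa [norm_eq_of_mem_sphere v] using abs_real_inner_le_norm (v : EuclideanSpace ℝ (Fin d)) (x j)

theorem Ksgn_eq_forwardOperator (x : Fin n → EuclideanSpace ℝ (Fin d)) :
    Ksgn d n x = forwardOperator (reluFeature x) := by
  ext μ j
  have hint (ν : Measure (Metric.sphere (0 : EuclideanSpace ℝ (Fin d)) 1)) [IsFiniteMeasure ν] :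
      Integrable (reluFeature x j) ν :=
    Integrable.of_bound (measurable_reluFeature x j).aestronglyMeasurable _
      (ae_of_all _ (abs_reluFeature_le x j))
  rw [forwardOperator, integral_eq_integral_posPart_sub_integral_negPart μ (hint _) (hint _)]
  rfl

end ReLU

theorem stmt14_general (d n N : ℕ) (x : Fin n → EuclideanSpace ℝ (Fin d)) (y₀ : Fin n → ℝ)
    (c : Fin N → ℝ) (hc : ∀ i, 0 < c i)
    (s : Fin N → ℝ) (hs : ∀ i, s i = 1 ∨ s i = -1)
    (w : Fin N → ↥(Metric.sphere (0 : EuclideanSpace ℝ (Fin d)) 1))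
    (p₀ : Fin n → ℝ)
    (hηsat : ∀ i, (∑ j, p₀ j * max 0 ⟪(w i : EuclideanSpace ℝ (Fin d)), x j⟫) = s i)
    (hηstrict : ∀ v : ↥(Metric.sphere (0 : EuclideanSpace ℝ (Fin d)) 1),
      (∀ i, v ≠ w i) →
        |∑ j, p₀ j * max 0 ⟪(v : EuclideanSpace ℝ (Fin d)), x j⟫| < 1)
    (hli : LinearIndependent ℝ
      (fun i : Fin N => Ksgn d n x ((Measure.dirac (w i)).toSignedMeasure)))
    (hfeas : Ksgn d n x (∑ i, (s i * c i) • (Measure.dirac (w i)).toSignedMeasure) = y₀) :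
    ∀ μ : SignedMeasure ↥(Metric.sphere (0 : EuclideanSpace ℝ (Fin d)) 1),
      Ksgn d n x μ = y₀ →
        tvNorm (∑ i, (s i * c i) • (Measure.dirac (w i)).toSignedMeasure) ≤ tvNorm μ ∧
        (tvNorm μ = tvNorm (∑ i, (s i * c i) • (Measure.dirac (w i)).toSignedMeasure) →
          μ = ∑ i, (s i * c i) • (Measure.dirac (w i)).toSignedMeasure) := by
  intro μ hμ
  have habs (i : Fin N) : |s i| = 1 := by rcases hs i with h | h <;> simp [h]
  have hoff (v) (hv : v ∉ range w) : ∀ i, v ≠ w i := fun i h => hv ⟨i, h.symm⟩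
  simp only [Measure.toSignedMeasure_dirac, smul_dirac, smul_eq_mul, mul_one,
    Ksgn_eq_forwardOperator, forwardOperator_dirac, one_smul] at hli hfeas hμ ⊢
  refine isUniqueTVMinimizer_of_certificate (measurable_reluFeature x)
    (fun j => ⟨_, abs_reluFeature_le x j⟩) (p := p₀) (fun v => ?_) (fun i => ?_)
    (fun v hv => hηstrict v (hoff v hv)) hli (hμ.trans hfeas.symm)
  · by_cases hv : v ∈ range w
    · obtain ⟨i, rfl⟩ := hv
      exact (habs i ▸ congrArg abs (hηsat i)).le
    · exact (hηstrict v (hoff v hv)).le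
  · rw [show ∑ j, p₀ j * reluFeature x j (w i) = s i from hηsat i]
    rcases hs i with h | h <;> simp [h, abs_of_pos (hc i)]

/-- Uniqueness of the sparse minimizer of the TV-interpolation problem: if
`μ₀ = Σ c₀^i σ^i δ_{w₀^i}` is feasible, a dual certificate `η₀ = K_* p₀` satisfies
`‖η₀‖_∞ ≤ 1`, `η₀(w₀^i) = σ^i`, and `|η₀| < 1` off the atoms, and the measurement vectors
`Kδ_{w₀^i}` are linearly independent, then `μ₀` is the unique TV-minimizer subject to
`Kμ = y₀`. -/
theorem stmt14 (d n N : ℕ) (x : Fin n → EuclideanSpace ℝ (Fin d)) (y₀ : Fin n → ℝ)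
    (c : Fin N → ℝ) (hc : ∀ i, 0 < c i)
    (s : Fin N → ℝ) (hs : ∀ i, s i = 1 ∨ s i = -1)
    (w : Fin N → ↥(Metric.sphere (0 : EuclideanSpace ℝ (Fin d)) 1))
    (hw : Function.Injective w)
    (p₀ : Fin n → ℝ)
    (hη1 : ∀ v : ↥(Metric.sphere (0 : EuclideanSpace ℝ (Fin d)) 1),
      |∑ j, p₀ j * max 0 ⟪(v : EuclideanSpace ℝ (Fin d)), x j⟫| ≤ 1)
    (hηsat : ∀ i, (∑ j, p₀ j * max 0 ⟪(w i : EuclideanSpace ℝ (Fin d)), x j⟫) = s i)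
    (hηstrict : ∀ v : ↥(Metric.sphere (0 : EuclideanSpace ℝ (Fin d)) 1),
      (∀ i, v ≠ w i) →
        |∑ j, p₀ j * max 0 ⟪(v : EuclideanSpace ℝ (Fin d)), x j⟫| < 1)
    (hli : LinearIndependent ℝ
      (fun i : Fin N => Ksgn d n x ((Measure.dirac (w i)).toSignedMeasure)))
    (hfeas : Ksgn d n x (∑ i, (s i * c i) • (Measure.dirac (w i)).toSignedMeasure) = y₀) :
    ∀ μ : SignedMeasure ↥(Metric.sphere (0 : EuclideanSpace ℝ (Fin d)) 1),
      Ksgn d n x μ = y₀ →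
        tvNorm (∑ i, (s i * c i) • (Measure.dirac (w i)).toSignedMeasure) ≤ tvNorm μ ∧
        (tvNorm μ = tvNorm (∑ i, (s i * c i) • (Measure.dirac (w i)).toSignedMeasure) →
          μ = ∑ i, (s i * c i) • (Measure.dirac (w i)).toSignedMeasure) :=
  stmt14_general d n N x y₀ c hc s hs w p₀ hηsat hηstrict hli hfeas
end

section
/- Let K: M(X) → Y be weak*-to-strong continuous linear, X compact metric, Y a Hilbert space, and y₀ ∈ Y with Kμ̄ = y₀ for some μ̄. Suppose ζ_n ∈ Y and λ_n > 0 satisfy ‖ζ_n‖ → 0, λ_n → 0, and ‖ζ_n‖²/λ_n → 0. Then any sequence μ_n of minimizers of μ ↦ ½‖Kμ − (y₀ + ζ_n)‖² + λ_n‖μ‖_TV admits a weak*-convergent subsequence, and every weak* limit point is a minimizer of ‖μ‖_TV subject to Kμ = y₀. -/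
open MeasureTheory

/-- Integration of a continuous function against a signed measure, via the Jordan
decomposition. -/
noncomputable def sInt {X : Type*} [TopologicalSpace X] [MeasurableSpace X]
    (μ : SignedMeasure X) (f : C(X, ℝ)) : ℝ :=
  (∫ x, f x ∂μ.toJordanDecomposition.posPart) - ∫ x, f x ∂μ.toJordanDecomposition.negPart

/-- Weak* convergence of a sequence of signed measures (tested against `C(X)`). -/
def WeakStarTendsto {X : Type*} [TopologicalSpace X] [MeasurableSpace X]
    (μs : ℕ → SignedMeasure X) (μ : SignedMeasure X) : Prop :=
  ∀ f : C(X, ℝ), Filter.Tendsto (fun k => sInt (μs k) f) Filter.atTop (nhds (sInt μ f))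

/-!
Testing the minimality of `μₙ` against any `ν` with `K ν = y₀` gives
`‖μₙ‖ ≤ ‖ζₙ‖² / λₙ / 2 + ‖ν‖` and `‖K μₙ - (y₀ + ζₙ)‖² ≤ ‖ζₙ‖² + 2 λₙ ‖ν‖`.
With `ν = μ̄` the first bound keeps the total variations bounded, so the Jordan parts of `μₙ`
have a common weakly convergent subsequence (finite measures of bounded mass on a compact metric
space form a sequentially compact set), which yields a weak* limit point.
The second bound gives `K μₙ → y₀`, hence `K μ = y₀` for every weak* limit point `μ`, and since
the total variation is sequentially weak* lower semicontinuous, the first bound passes to the limit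
as `‖μ‖ ≤ ‖ν‖`.
-/

open Filter Topology TopologicalSpace
open scoped NNReal ENNReal

theorem MeasureTheory.Measure.toSignedMeasure_sub_eq_sub_iff {α : Type*} [MeasurableSpace α]
    {a b c d : Measure α} [IsFiniteMeasure a] [IsFiniteMeasure b] [IsFiniteMeasure c]
    [IsFiniteMeasure d] :
    a.toSignedMeasure - b.toSignedMeasure = c.toSignedMeasure - d.toSignedMeasure ↔
      a + d = c + b := by
  rw [sub_eq_sub_iff_add_eq_add, ← Measure.toSignedMeasure_add, ← Measure.toSignedMeasure_add,
    Measure.toSignedMeasure_eq_toSignedMeasure_iff]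

section CompactSpace

variable {X : Type*} [TopologicalSpace X] [CompactSpace X] [MeasurableSpace X]

theorem ContinuousMap.integrable [OpensMeasurableSpace X] (μ : Measure X) [IsFiniteMeasure μ]
    (f : C(X, ℝ)) : Integrable f μ :=
  (BoundedContinuousFunction.mkOfCompact f).integrable μ

theorem ContinuousMap.continuous_integral [BorelSpace X] (μ : Measure X) [IsFiniteMeasure μ] :
    Continuous fun f : C(X, ℝ) => ∫ x, f x ∂μ := by
  have h : (fun f : C(X, ℝ) => ∫ x, f x ∂μ) = fun f => ∫ x, ContinuousMap.toLp 1 μ ℝ f x ∂μ :=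
    funext fun f => integral_congr_ae (ContinuousMap.coeFn_toLp μ f).symm
  rw [h]
  exact (MeasureTheory.continuous_integral (μ := μ) (G := ℝ)).comp
    (ContinuousMap.toLp (E := ℝ) 1 μ ℝ).continuous

end CompactSpace

namespace MeasureTheory.FiniteMeasure

variable {X : Type*} [MetricSpace X] [CompactSpace X] [MeasurableSpace X] [BorelSpace X]

theorem eq_of_integral_eq_of_denseRange {ι : Type*} {D : ι → C(X, ℝ)}
    (hD : DenseRange D) {μ ν : FiniteMeasure X}
    (h : ∀ i, ∫ x, D i x ∂(μ : Measure X) = ∫ x, D i x ∂(ν : Measure X)) : μ = ν := by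
  have hC : (fun f : C(X, ℝ) => ∫ x, f x ∂(μ : Measure X)) =
      fun f => ∫ x, f x ∂(ν : Measure X) :=
    (ContinuousMap.continuous_integral _).ext_on hD (ContinuousMap.continuous_integral _)
      (Set.eqOn_range.mpr (funext h))
  exact ext_of_forall_integral_eq fun f => congrFun hC f.toContinuousMap

variable (X) in
theorem isSeqCompact_setOf_mass_le (C : ℝ≥0) :
    IsSeqCompact {μ : FiniteMeasure X | μ.mass ≤ C} := by
  set S := {μ : FiniteMeasure X | μ.mass ≤ C}
  have : CompactSpace S :=
    isCompact_iff_compactSpace.mp (isCompact_setOfPred_finiteMeasure_le_of_compactSpace X C)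
  have : MetrizableSpace S :=
    Metric.PiNatEmbed.TopologicalSpace.MetrizableSpace.of_countable_separating
      (fun n (μ : S) => ∫ x, denseSeq C(X, ℝ) n x ∂(μ : Measure X))
      (fun n => (continuous_integral_continuousMap _).comp continuous_subtype_val)
      fun μ ν hne => by
        contrapose! hne
        exact Subtype.ext (eq_of_integral_eq_of_denseRange (denseRange_denseSeq _) hne)
  exact isSeqCompact_iff_seqCompactSpace.mpr inferInstance

end MeasureTheory.FiniteMeasure

namespace MeasureTheory.SignedMeasure

variable {X : Type*} [MeasurableSpace X]

noncomputable def jordanParts (μ : SignedMeasure X) : FiniteMeasure X × FiniteMeasure X :=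
  (⟨μ.toJordanDecomposition.posPart, inferInstance⟩,
    ⟨μ.toJordanDecomposition.negPart, inferInstance⟩)

noncomputable def ofFiniteMeasures (P : FiniteMeasure X × FiniteMeasure X) : SignedMeasure X :=
  (P.1 : Measure X).toSignedMeasure - (P.2 : Measure X).toSignedMeasure

theorem ofFiniteMeasures_jordanParts (μ : SignedMeasure X) :
    ofFiniteMeasures (jordanParts μ) = μ :=
  μ.toSignedMeasure_toJordanDecomposition

theorem tvNorm_nonneg (μ : SignedMeasure X) : 0 ≤ tvNorm μ :=
  ENNReal.toReal_nonneg

theorem tvNorm_eq_mass_add_mass (μ : SignedMeasure X) :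
    tvNorm μ = (jordanParts μ).1.mass + (jordanParts μ).2.mass := by
  rw [tvNorm, totalVariation, Measure.add_apply,
    ENNReal.toReal_add (measure_ne_top _ _) (measure_ne_top _ _)]
  rfl

theorem tvNorm_ofFiniteMeasures_le (P : FiniteMeasure X × FiniteMeasure X) :
    tvNorm (ofFiniteMeasures P) ≤ P.1.mass + P.2.mass := by
  have h : ∀ μ ν : FiniteMeasure X, ((μ : Measure X) - ν) Set.univ ≤ μ.mass := fun μ ν => by
    rw [FiniteMeasure.ennreal_mass]
    exact Measure.sub_le (μ := (μ : Measure X)) _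
  have hle : (ofFiniteMeasures P).totalVariation Set.univ ≤
      ((P.1.mass + P.2.mass : ℝ≥0) : ℝ≥0∞) := by
    rw [ofFiniteMeasures, totalVariation, Measure.toJordanDecomposition_toSignedMeasure_sub,
      Measure.jordanDecompositionOfToSignedMeasureSub_posPart,
      Measure.jordanDecompositionOfToSignedMeasureSub_negPart, Measure.add_apply, ENNReal.coe_add]
    exact add_le_add (h _ _) (h _ _)
  have := ENNReal.toReal_mono ENNReal.coe_ne_top hle
  rwa [ENNReal.coe_toReal, NNReal.coe_add] at this

section Topological

variable [TopologicalSpace X] [CompactSpace X] [OpensMeasurableSpace X]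

theorem sInt_ofFiniteMeasures (P : FiniteMeasure X × FiniteMeasure X) (f : C(X, ℝ)) :
    sInt (ofFiniteMeasures P) f = ∫ x, f x ∂(P.1 : Measure X) - ∫ x, f x ∂(P.2 : Measure X) := by
  set μ := ofFiniteMeasures P
  have h : μ.toJordanDecomposition.posPart + P.2 = P.1 + μ.toJordanDecomposition.negPart :=
    Measure.toSignedMeasure_sub_eq_sub_iff.mp μ.toSignedMeasure_toJordanDecomposition
  have := congrArg (fun ν => ∫ x, f x ∂ν) h
  simp only [integral_add_measure (f.integrable _) (f.integrable _)] at this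
  rw [sInt]
  linarith

theorem weakStarTendsto_of_tendsto_jordanParts {μs : ℕ → SignedMeasure X}
    {P : FiniteMeasure X × FiniteMeasure X}
    (h : Tendsto (fun k => jordanParts (μs k)) atTop (𝓝 P)) :
    WeakStarTendsto μs (ofFiniteMeasures P) := by
  intro f
  rw [sInt_ofFiniteMeasures]
  exact (((FiniteMeasure.continuous_integral_continuousMap f).tendsto _).comp h.fst_nhds).sub
    (((FiniteMeasure.continuous_integral_continuousMap f).tendsto _).comp h.snd_nhds)

end Topological

section Metric

variable [MetricSpace X] [BorelSpace X]

theorem ext_of_sInt_eq {μ ν : SignedMeasure X} (h : ∀ f, sInt μ f = sInt ν f) : μ = ν := by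
  rw [← ofFiniteMeasures_jordanParts μ, ← ofFiniteMeasures_jordanParts ν, ofFiniteMeasures,
    ofFiniteMeasures, Measure.toSignedMeasure_sub_eq_sub_iff]
  refine ext_of_forall_integral_eq_of_IsFiniteMeasure fun f => ?_
  have := h f.toContinuousMap
  rw [sInt, sInt] at this
  rw [integral_add_measure (f.integrable _) (f.integrable _),
    integral_add_measure (f.integrable _) (f.integrable _)]
  exact sub_eq_sub_iff_add_eq_add.mp this

theorem _root_.WeakStarTendsto.unique {μs : ℕ → SignedMeasure X} {μ ν : SignedMeasure X}
    (hμ : WeakStarTendsto μs μ) (hν : WeakStarTendsto μs ν) : μ = ν :=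
  ext_of_sInt_eq fun f => tendsto_nhds_unique (hμ f) (hν f)

variable [CompactSpace X]

theorem exists_subseq_tendsto_jordanParts {μs : ℕ → SignedMeasure X} {C : ℝ}
    (hC : ∀ k, tvNorm (μs k) ≤ C) :
    ∃ φ : ℕ → ℕ, StrictMono φ ∧
      ∃ P, Tendsto (fun k => jordanParts (μs (φ k))) atTop (𝓝 P) := by
  have hmass (k : ℕ) :
      (jordanParts (μs k)).1.mass ≤ C.toNNReal ∧ (jordanParts (μs k)).2.mass ≤ C.toNNReal := by
    have := tvNorm_eq_mass_add_mass (μs k) ▸ hC k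
    constructor <;> apply NNReal.le_toNNReal_of_coe_le <;> linarith [NNReal.coe_nonneg
      (jordanParts (μs k)).1.mass, NNReal.coe_nonneg (jordanParts (μs k)).2.mass]
  obtain ⟨P₁, -, φ₁, hφ₁, h₁⟩ :=
    FiniteMeasure.isSeqCompact_setOf_mass_le X C.toNNReal fun k => (hmass k).1
  obtain ⟨P₂, -, φ₂, hφ₂, h₂⟩ :=
    FiniteMeasure.isSeqCompact_setOf_mass_le X C.toNNReal fun k => (hmass (φ₁ k)).2
  exact ⟨φ₁ ∘ φ₂, hφ₁.comp hφ₂, (P₁, P₂), (h₁.comp hφ₂.tendsto_atTop).prodMk_nhds h₂⟩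

theorem exists_weakStarTendsto_subseq {μs : ℕ → SignedMeasure X} {C : ℝ}
    (hC : ∀ k, tvNorm (μs k) ≤ C) :
    ∃ (φ : ℕ → ℕ) (μ : SignedMeasure X), StrictMono φ ∧
      WeakStarTendsto (fun k => μs (φ k)) μ := by
  obtain ⟨φ, hφ, P, hP⟩ := exists_subseq_tendsto_jordanParts hC
  exact ⟨φ, _, hφ, weakStarTendsto_of_tendsto_jordanParts hP⟩

theorem _root_.WeakStarTendsto.tvNorm_le {μs : ℕ → SignedMeasure X} {μ : SignedMeasure X}
    (h : WeakStarTendsto μs μ) {c : ℕ → ℝ} {C : ℝ}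
    (hc : Tendsto c atTop (𝓝 C)) (hμs : ∀ k, tvNorm (μs k) ≤ c k) : tvNorm μ ≤ C := by
  obtain ⟨B, hB⟩ := hc.bddAbove_range
  obtain ⟨φ, hφ, P, hP⟩ :=
    exists_subseq_tendsto_jordanParts fun k => (hμs k).trans (hB ⟨k, rfl⟩)
  have hμ : μ = ofFiniteMeasures P :=
    WeakStarTendsto.unique (fun f => (h f).comp hφ.tendsto_atTop)
      (weakStarTendsto_of_tendsto_jordanParts hP)
  have hmass : Tendsto (fun k => tvNorm (μs (φ k))) atTop (𝓝 (P.1.mass + P.2.mass : ℝ)) := by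
    simp only [tvNorm_eq_mass_add_mass]
    exact (NNReal.tendsto_coe.mpr hP.fst_nhds.mass).add (NNReal.tendsto_coe.mpr hP.snd_nhds.mass)
  calc tvNorm μ ≤ P.1.mass + P.2.mass := hμ ▸ tvNorm_ofFiniteMeasures_le P
    _ ≤ C := le_of_tendsto_of_tendsto' hmass (hc.comp hφ.tendsto_atTop) fun k => hμs (φ k)

end Metric

end MeasureTheory.SignedMeasure

section Tikhonov

variable {α Y : Type*} [SeminormedAddCommGroup Y]

noncomputable def tikhonov (A : α → Y) (R : α → ℝ) (y : Y) (lam : ℝ) (μ : α) : ℝ :=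
  1 / 2 * ‖A μ - y‖ ^ 2 + lam * R μ

variable {A : α → Y} {R : α → ℝ} {y ζ : Y} {lam : ℝ} {μ ν : α}

theorem tikhonov_of_apply_eq (hν : A ν = y) :
    tikhonov A R (y + ζ) lam ν = 1 / 2 * ‖ζ‖ ^ 2 + lam * R ν := by
  rw [tikhonov, hν, sub_add_cancel_left, norm_neg]

theorem reg_le_of_tikhonov_le (hlam : 0 < lam) (hν : A ν = y)
    (hmin : tikhonov A R (y + ζ) lam μ ≤ tikhonov A R (y + ζ) lam ν) :
    R μ ≤ ‖ζ‖ ^ 2 / lam / 2 + R ν := by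
  rw [tikhonov_of_apply_eq hν, tikhonov] at hmin
  rw [div_div, div_add' _ _ _ (by positivity), le_div_iff₀ (by positivity)]
  nlinarith [sq_nonneg ‖A μ - (y + ζ)‖]

theorem residual_sq_le_of_tikhonov_le (hlam : 0 ≤ lam) (hR : 0 ≤ R μ) (hν : A ν = y)
    (hmin : tikhonov A R (y + ζ) lam μ ≤ tikhonov A R (y + ζ) lam ν) :
    ‖A μ - (y + ζ)‖ ^ 2 ≤ ‖ζ‖ ^ 2 + 2 * lam * R ν := by
  rw [tikhonov_of_apply_eq hν, tikhonov] at hmin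
  nlinarith [mul_nonneg hlam hR]

theorem tendsto_apply_of_tikhonov_le {μs : ℕ → α} {ζ : ℕ → Y} {lam : ℕ → ℝ}
    (hR : ∀ μ, 0 ≤ R μ) (hν : A ν = y) (hlam : ∀ k, 0 ≤ lam k)
    (hζ : Tendsto (fun k => ‖ζ k‖) atTop (𝓝 0)) (hlam0 : Tendsto lam atTop (𝓝 0))
    (hmin : ∀ k, tikhonov A R (y + ζ k) (lam k) (μs k) ≤ tikhonov A R (y + ζ k) (lam k) ν) :
    Tendsto (fun k => A (μs k)) atTop (𝓝 y) := by
  have hres : Tendsto (fun k => ‖A (μs k) - (y + ζ k)‖ ^ 2) atTop (𝓝 0) := by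
    have hbound : Tendsto (fun k => ‖ζ k‖ ^ 2 + 2 * lam k * R ν) atTop (𝓝 0) := by
      simpa using (hζ.pow 2).add ((hlam0.const_mul 2).mul_const (R ν))
    exact squeeze_zero (fun k => by positivity)
      (fun k => residual_sq_le_of_tikhonov_le (hlam k) (hR _) hν (hmin k)) hbound
  have hr : Tendsto (fun k => A (μs k) - (y + ζ k)) atTop (𝓝 0) := by
    rw [tendsto_zero_iff_norm_tendsto_zero]
    simpa [Real.sqrt_sq (norm_nonneg _)] using hres.sqrt
  simpa using hr.add ((tendsto_const_nhds (x := y)).add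
    (tendsto_zero_iff_norm_tendsto_zero.mpr hζ))

end Tikhonov

theorem stmt15_general {X : Type*} [MetricSpace X] [CompactSpace X] [MeasurableSpace X] [BorelSpace X]
    {Y : Type*} [NormedAddCommGroup Y] [InnerProductSpace ℝ Y]
    (K : SignedMeasure X →ₗ[ℝ] Y)
    (hK : ∀ (μs : ℕ → SignedMeasure X) (μ : SignedMeasure X),
      WeakStarTendsto μs μ →
        Filter.Tendsto (fun k => K (μs k)) Filter.atTop (nhds (K μ)))
    (y₀ : Y) (μbar : SignedMeasure X) (hfeas : K μbar = y₀)
    (ζ : ℕ → Y) (lam : ℕ → ℝ) (hlam : ∀ k, 0 < lam k)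
    (hζ0 : Filter.Tendsto (fun k => ‖ζ k‖) Filter.atTop (nhds 0))
    (hlam0 : Filter.Tendsto lam Filter.atTop (nhds 0))
    (hrate : Filter.Tendsto (fun k => ‖ζ k‖ ^ 2 / lam k) Filter.atTop (nhds 0))
    (μs : ℕ → SignedMeasure X)
    (hmin : ∀ k, ∀ ν : SignedMeasure X,
      (1 / 2) * ‖K (μs k) - (y₀ + ζ k)‖ ^ 2 + lam k * tvNorm (μs k)
        ≤ (1 / 2) * ‖K ν - (y₀ + ζ k)‖ ^ 2 + lam k * tvNorm ν) :
    (∃ (φ : ℕ → ℕ) (μlim : SignedMeasure X), StrictMono φ ∧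
        WeakStarTendsto (fun k => μs (φ k)) μlim) ∧
    (∀ (φ : ℕ → ℕ) (μlim : SignedMeasure X), StrictMono φ →
        WeakStarTendsto (fun k => μs (φ k)) μlim →
          K μlim = y₀ ∧ ∀ ν : SignedMeasure X, K ν = y₀ → tvNorm μlim ≤ tvNorm ν) := by
  have hreg (k : ℕ) (ν : SignedMeasure X) (hν : K ν = y₀) :
      tvNorm (μs k) ≤ ‖ζ k‖ ^ 2 / lam k / 2 + tvNorm ν :=
    reg_le_of_tikhonov_le (hlam k) hν (hmin k ν)
  obtain ⟨M, hM⟩ := hrate.bddAbove_range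
  have hbdd (k : ℕ) : tvNorm (μs k) ≤ M / 2 + tvNorm μbar :=
    (hreg k μbar hfeas).trans (by gcongr; exact hM ⟨k, rfl⟩)
  have hKμs : Tendsto (fun k => K (μs k)) atTop (𝓝 y₀) :=
    tendsto_apply_of_tikhonov_le SignedMeasure.tvNorm_nonneg hfeas (fun k => (hlam k).le) hζ0 hlam0
      fun k => hmin k μbar
  refine ⟨SignedMeasure.exists_weakStarTendsto_subseq hbdd,
    fun φ μlim hφ hμlim => ⟨?_, fun ν hν => ?_⟩⟩
  · exact tendsto_nhds_unique (hK _ _ hμlim) (hKμs.comp hφ.tendsto_atTop)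
  · refine hμlim.tvNorm_le ?_ fun k => hreg (φ k) ν hν
    simpa using ((hrate.comp hφ.tendsto_atTop).div_const 2).add_const (tvNorm ν)

/-- Tikhonov convergence: if `‖ζ_n‖ → 0`, `λ_n → 0`, `‖ζ_n‖²/λ_n → 0`, then any sequence of
minimizers of `μ ↦ ½‖Kμ − (y₀ + ζ_n)‖² + λ_n ‖μ‖_TV` has a weak*-convergent subsequence,
and every weak* limit point minimizes `‖μ‖_TV` subject to `Kμ = y₀`. -/
theorem stmt15 {X : Type*} [MetricSpace X] [CompactSpace X] [MeasurableSpace X] [BorelSpace X]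
    {Y : Type*} [NormedAddCommGroup Y] [InnerProductSpace ℝ Y] [CompleteSpace Y]
    (K : SignedMeasure X →ₗ[ℝ] Y)
    (hK : ∀ (μs : ℕ → SignedMeasure X) (μ : SignedMeasure X),
      WeakStarTendsto μs μ →
        Filter.Tendsto (fun k => K (μs k)) Filter.atTop (nhds (K μ)))
    (y₀ : Y) (μbar : SignedMeasure X) (hfeas : K μbar = y₀)
    (ζ : ℕ → Y) (lam : ℕ → ℝ) (hlam : ∀ k, 0 < lam k)
    (hζ0 : Filter.Tendsto (fun k => ‖ζ k‖) Filter.atTop (nhds 0))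
    (hlam0 : Filter.Tendsto lam Filter.atTop (nhds 0))
    (hrate : Filter.Tendsto (fun k => ‖ζ k‖ ^ 2 / lam k) Filter.atTop (nhds 0))
    (μs : ℕ → SignedMeasure X)
    (hmin : ∀ k, ∀ ν : SignedMeasure X,
      (1 / 2) * ‖K (μs k) - (y₀ + ζ k)‖ ^ 2 + lam k * tvNorm (μs k)
        ≤ (1 / 2) * ‖K ν - (y₀ + ζ k)‖ ^ 2 + lam k * tvNorm ν) :
    (∃ (φ : ℕ → ℕ) (μlim : SignedMeasure X), StrictMono φ ∧
        WeakStarTendsto (fun k => μs (φ k)) μlim) ∧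
    (∀ (φ : ℕ → ℕ) (μlim : SignedMeasure X), StrictMono φ →
        WeakStarTendsto (fun k => μs (φ k)) μlim →
          K μlim = y₀ ∧ ∀ ν : SignedMeasure X, K ν = y₀ → tvNorm μlim ≤ tvNorm ν) :=
  stmt15_general K hK y₀ μbar hfeas ζ lam hlam hζ0 hlam0 hrate μs hmin
end
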